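/- arXiv:1912.09480 — 2 statements merged into one kernel-verified Lean document; each statement's English description precedes it below -/
import Mathlib

section
/- Let ⊢ be a regular entailment relation on a preordered commutative group G and fix x in G. Define A ⊢ₓ B to hold iff there exists a natural number p such that A ∪ (A + p·x) ⊢ B. Then ⊢ₓ is a regular entailment relation with 0 ⊢ₓ x, and it is the least regular entailment relation containing ⊢ in which {0} entails {x}. -/
open Finset Pointwise

/-- A regular entailment relation on a preordered commutative group `G`:
a relation between nonempty finite subsets of `G` satisfying weakening, cut,
`{a} ⊢ {b}` when `a ≤ b`, translation invariance, and regularity. -/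
structure IsRegularEntailment {G : Type*} [AddCommGroup G] [Preorder G]
    [CovariantClass G G (· + ·) (· ≤ ·)] [DecidableEq G]
    (r : Finset G → Finset G → Prop) : Prop where
  weaken : ∀ {A A' B B' : Finset G}, A'.Nonempty → B'.Nonempty →
    A' ⊆ A → B' ⊆ B → r A' B' → r A B
  cut : ∀ {A B : Finset G} (x : G), A.Nonempty → B.Nonempty →
    r (insert x A) B → r A (insert x B) → r A B
  of_le : ∀ {a b : G}, a ≤ b → r {a} {b}
  translate : ∀ {A B : Finset G} (x : G),
    r (A.image (· + x)) (B.image (· + x)) → r A B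
  regular : ∀ a b x y : G, r {a + x, b + y} {a + b, x + y}


/-!
Regularity gives `{a, a + k • x} ⊢ {a + j • x}` for `j ≤ k`, so intermediate translates
`A + j • x` can be cut away and `A ∪ (A + p • x) ⊢ B` is monotone in `p`. Cut for `⊢ₓ` then
reduces, for a common `p`, to cuts in `⊢` over `A ∪ (A + p • x) ∪ (A + 2p • x)`, where the
instance `{c, b + p • x} ⊢ {c + p • x, b}` of regularity moves the cut formula `c` along `x`.
Conversely, a regular relation with `{0} ⊢ {x}` proves `{a} ⊢ {a + p • x}` by translation and
cut, which cuts away `A + p • x`.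
-/

namespace IsRegularEntailment

variable {G : Type*} [AddCommGroup G] [Preorder G] [CovariantClass G G (· + ·) (· ≤ ·)]
  [DecidableEq G] {r : Finset G → Finset G → Prop}

theorem of_mem (hr : IsRegularEntailment r) {A B : Finset G} {a : G} (hA : a ∈ A)
    (hB : a ∈ B) : r A B :=
  hr.weaken (singleton_nonempty a) (singleton_nonempty a) (singleton_subset_iff.2 hA)
    (singleton_subset_iff.2 hB) (hr.of_le le_rfl)

theorem trans_singleton (hr : IsRegularEntailment r) {a b c : G} (hab : r {a} {b})
    (hbc : r {b} {c}) : r {a} {c} :=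
  hr.cut b (singleton_nonempty a) (singleton_nonempty c)
    (hr.weaken (by simp) (by simp) (by simp) le_rfl hbc)
    (hr.weaken (by simp) (by simp) le_rfl (by simp) hab)

theorem image_add (hr : IsRegularEntailment r) {A B : Finset G} (t : G) (h : r A B) :
    r (A.image (· + t)) (B.image (· + t)) := by
  refine hr.translate (-t) ?_
  simpa only [image_image, Function.comp_def, add_neg_cancel_right, image_id'] using h

theorem regular_sub (hr : IsRegularEntailment r) (s t w : G) : r {s, t} {w, s + t - w} := by
  simpa [sub_add_eq_add_sub] using hr.regular w 0 (s - w) t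

theorem singleton_add_nsmul (hr : IsRegularEntailment r) {x : G}
    (h : r {0} {x}) (a : G) (p : ℕ) : r {a} {a + p • x} := by
  induction p with
  | zero => simpa using hr.of_le (le_refl a)
  | succ p ih =>
    have hstep := hr.image_add (a + p • x) h
    rw [image_singleton, image_singleton, zero_add, add_comm x, add_assoc, ← succ_nsmul] at hstep
    exact hr.trans_singleton ih hstep

theorem cut_union_left (hr : IsRegularEntailment r) {A B : Finset G} (hA : A.Nonempty)
    (hB : B.Nonempty) (S : Finset G) (hS : ∀ s ∈ S, r A (insert s B)) (h : r (A ∪ S) B) :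
    r A B := by
  induction S using Finset.induction_on with
  | empty => simpa using h
  | insert s S _ ih =>
    refine ih (fun t ht ↦ hS t (mem_insert_of_mem ht)) ?_
    refine hr.cut s (hA.mono subset_union_left) hB ?_ ?_
    · exact hr.weaken (by simp) hB (by grind) le_rfl h
    · exact hr.weaken hA (by simp) subset_union_left le_rfl (hS s (mem_insert_self s S))

theorem cut_union_right (hr : IsRegularEntailment r) {A B : Finset G} (hA : A.Nonempty)
    (hB : B.Nonempty) (S : Finset G) (hS : ∀ s ∈ S, r (insert s A) B) (h : r A (B ∪ S)) :
    r A B := by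
  induction S using Finset.induction_on with
  | empty => simpa using h
  | insert s S _ ih =>
    refine ih (fun t ht ↦ hS t (mem_insert_of_mem ht)) ?_
    refine hr.cut s hA (hB.mono subset_union_left) ?_ ?_
    · exact hr.weaken (by simp) hB le_rfl subset_union_left (hS s (mem_insert_self s S))
    · exact hr.weaken hA (by simp) le_rfl (by grind) h

theorem pair_add_nsmul_of_le (hr : IsRegularEntailment r) (x : G) {j k : ℕ} (hjk : j ≤ k)
    (a : G) : r {a, a + k • x} {a + j • x} := by
  induction k generalizing j a with
  | zero =>
    obtain rfl := Nat.le_zero.1 hjk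
    exact hr.of_mem (a := a + 0 • x) (by simp) (by simp)
  | succ k ih =>
    cases j with
    | zero => exact hr.of_mem (a := a) (by simp) (by simp)
    | succ j =>
      obtain rfl | hjk := (Nat.le_of_succ_le_succ hjk).eq_or_lt
      · exact hr.of_mem (a := a + (j + 1) • x) (by simp) (by simp)
      have hreg : r {a, a + (k + 1) • x} {a + x, a + k • x} := by
        convert hr.regular_sub a (a + (k + 1) • x) (a + x) using 3; rw [succ_nsmul]; abel
      have hshift := ih hjk.le (a + x)
      rw [add_assoc, add_assoc, ← succ_nsmul', ← succ_nsmul'] at hshift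
      refine hr.cut (a + k • x) (by simp) (by simp) ?_ ?_
      · exact hr.weaken (by simp) (by simp) (by grind) le_rfl (ih hjk a)
      refine hr.cut (a + x) (by simp) (by simp) ?_ ?_
      · exact hr.weaken (by simp) (by simp) (by grind) (by grind) hshift
      · exact hr.weaken (by simp) (by simp) le_rfl (by grind) hreg

theorem union_image_of_union_image_union (hr : IsRegularEntailment r) (x : G) {p q : ℕ}
    (hpq : p ≤ q) {A B : Finset G} (hA : A.Nonempty) (hB : B.Nonempty)
    (h : r (A ∪ A.image (· + q • x) ∪ A.image (· + p • x)) B) :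
    r (A ∪ A.image (· + q • x)) B := by
  refine hr.cut_union_left (by simp [hA]) hB _ (forall_mem_image.2 fun a ha ↦ ?_) h
  exact hr.weaken (by simp) (by simp) (by grind) (by simp) (hr.pair_add_nsmul_of_le x hpq a)

theorem union_image_nsmul_mono (hr : IsRegularEntailment r) (x : G) {p q : ℕ} (hpq : p ≤ q)
    {A B : Finset G} (hA : A.Nonempty) (hB : B.Nonempty)
    (h : r (A ∪ A.image (· + p • x)) B) : r (A ∪ A.image (· + q • x)) B :=
  hr.union_image_of_union_image_union x hpq hA hB
    (hr.weaken (by simp [hA]) hB (by grind) le_rfl h)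

theorem cut_union_image (hr : IsRegularEntailment r) {A B : Finset G} (c y : G)
    (hA : A.Nonempty) (hB : B.Nonempty)
    (h₁ : r (insert c A ∪ (insert c A).image (· + y)) B)
    (h₂ : r (A ∪ A.image (· + y)) (insert c B)) :
    r (A ∪ A.image (· + (y + y)) ∪ A.image (· + y)) B := by
  set D := A ∪ A.image (· + (y + y)) ∪ A.image (· + y)
  have hD : D.Nonempty := by simp [D, hA]
  have hleft : r (insert (c + y) D) B :=
    hr.cut c (by simp) hB (hr.weaken (by simp) hB (by grind) le_rfl h₁)
      (hr.weaken (by simp [hA]) (by simp) (by grind) le_rfl h₂)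
  have hshift : ∀ b ∈ B, r (insert (b + y) D) (insert (c + y) B) := by
    intro b hb
    have hreg : r {c, b + y} {c + y, b} := by
      simpa using hr.regular_sub c (b + y) (c + y)
    exact hr.cut c (by simp) (by simp) (hr.weaken (by simp) (by simp) (by grind) (by grind) hreg)
      (hr.weaken (by simp [hA]) (by simp) (by grind) (by grind) h₂)
  have hright : r D (insert (c + y) B) := by
    refine hr.cut_union_right hD (by simp) (B.image (· + y)) (forall_mem_image.2 hshift) ?_
    refine hr.weaken ((hA.mono subset_union_left).image _) (by simp) ?_ (by grind)
      (hr.image_add y h₂)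
    simp only [image_union, image_image, Function.comp_def, add_assoc]
    grind
  exact hr.cut (c + y) hD hB hleft hright

end IsRegularEntailment

section Forcing

variable {G : Type*} [AddCommGroup G] [Preorder G] [CovariantClass G G (· + ·) (· ≤ ·)]
  [DecidableEq G] {r : Finset G → Finset G → Prop}

/-- The relation `⊢ₓ` of the paper. -/
def forcing (r : Finset G → Finset G → Prop) (x : G) (A B : Finset G) : Prop :=
  ∃ p : ℕ, r (A ∪ A.image (· + p • x)) B

theorem forcing_cut (hr : IsRegularEntailment r) (x : G) {A B : Finset G} (c : G)
    (hA : A.Nonempty) (hB : B.Nonempty) (h₁ : forcing r x (insert c A) B)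
    (h₂ : forcing r x A (insert c B)) : forcing r x A B := by
  obtain ⟨p, h₁⟩ := h₁
  obtain ⟨q, h₂⟩ := h₂
  set n := max p q
  have h := hr.cut_union_image c (n • x) hA hB
    (hr.union_image_nsmul_mono x (le_max_left p q) (by simp) hB h₁)
    (hr.union_image_nsmul_mono x (le_max_right p q) hA (by simp) h₂)
  rw [← add_nsmul] at h
  exact ⟨n + n, hr.union_image_of_union_image_union x (Nat.le_add_left n n) hA hB h⟩

theorem forcing_translate (hr : IsRegularEntailment r) (x : G) {A B : Finset G} (t : G)
    (h : forcing r x (A.image (· + t)) (B.image (· + t))) : forcing r x A B := by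
  obtain ⟨p, h⟩ := h
  refine ⟨p, hr.translate t ?_⟩
  simpa only [image_union, image_image, Function.comp_def, add_right_comm] using h

theorem isRegularEntailment_forcing (hr : IsRegularEntailment r) (x : G) :
    IsRegularEntailment (forcing r x) where
  weaken hA' hB' hAA' hBB' := fun ⟨p, h⟩ ↦
    ⟨p, hr.weaken (by simp [hA']) hB' (union_subset_union hAA' (image_subset_image hAA'))
      hBB' h⟩
  cut c hA hB h₁ h₂ := forcing_cut hr x c hA hB h₁ h₂
  of_le hab := ⟨0, by simpa using hr.of_le hab⟩
  translate t := forcing_translate hr x t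
  regular a b u v := ⟨0, by simpa using hr.regular a b u v⟩

theorem forcing_singleton_zero (hr : IsRegularEntailment r) (x : G) : forcing r x {0} {x} :=
  ⟨1, hr.of_mem (a := x) (by simp) (by simp)⟩

theorem forcing_imp (hr : IsRegularEntailment r) {r₀ : Finset G → Finset G → Prop} {x : G}
    (hle : ∀ A B, r₀ A B → r A B) (hx : r {0} {x}) {A B : Finset G} (hA : A.Nonempty)
    (hB : B.Nonempty) (h : forcing r₀ x A B) : r A B := by
  obtain ⟨p, h⟩ := h
  refine hr.cut_union_left hA hB _ (forall_mem_image.2 fun a ha ↦ ?_) (hle _ _ h)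
  exact hr.weaken (by simp) (by simp) (by simpa) (by simp) (hr.singleton_add_nsmul hx a p)

end Forcing

theorem regular_entailment_force {G : Type*} [AddCommGroup G] [Preorder G]
    [CovariantClass G G (· + ·) (· ≤ ·)] [DecidableEq G]
    (r : Finset G → Finset G → Prop) (hr : IsRegularEntailment r) (x : G) :
    IsRegularEntailment (fun A B => ∃ p : ℕ, r (A ∪ A.image (· + p • x)) B) ∧
    (∃ p : ℕ, r (({0} : Finset G) ∪ ({0} : Finset G).image (· + p • x)) {x}) ∧
    (∀ r' : Finset G → Finset G → Prop, IsRegularEntailment r' →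
      (∀ A B : Finset G, r A B → r' A B) → r' {0} {x} →
      ∀ A B : Finset G, A.Nonempty → B.Nonempty →
        (∃ p : ℕ, r (A ∪ A.image (· + p • x)) B) → r' A B) :=
  ⟨isRegularEntailment_forcing hr x, forcing_singleton_zero hr x,
    fun _ hr' hle hx _ _ hA hB h ↦ forcing_imp hr' hle hx hA hB h⟩
end

section
/- Let ⊢ be a regular entailment relation on a preordered commutative group G. Then A ⊢ B if and only if A - B ⊢ {0}, if and only if {0} ⊢ B - A, where A - B = {a - b : a ∈ A, b ∈ B}. -/
open Finset Pointwise

/-!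
Regularity gives `{u, v} ⊢ {s, t}` whenever `u + v = s + t`; cutting on partial sums extends
this to `Γ ⊢ Δ` as soon as `c - d`, for some `c ∈ Γ` and `d ∈ Δ`, is a sum of elements of
`Δ - Γ`.

For `A ⊢ B ⇒ {0} ⊢ B - A`, translate by `-a` to get `{0} ∪ (A - a) ⊢ B - A` and cut away the
elements `a' - a`. Either `a - a'` is a sum of differences recorded so far, and the sum rule
closes the branch, or `a' - a` is recorded and `a'` becomes the new base point. Each switch
reaches a new element of `A`, so the descent terminates. The converse is the mirror argument,
and `A - B ⊢ {0}` reduces to the second equivalence because `{0} - (A - B) = B - A`.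
-/

theorem ncard_setOf_sub_notMem_lt {G : Type*} [AddCommGroup G] {A : Finset G}
    {M M' : AddSubmonoid G} (hM : M ≤ M') {a a' : G} (ha' : a' ∈ A) (hfar : a - a' ∉ M)
    (hstep : a' - a ∈ M') :
    {x | x ∈ A ∧ a' - x ∉ M'}.ncard < {x | x ∈ A ∧ a - x ∉ M}.ncard := by
  refine Set.ncard_lt_ncard ⟨fun x ⟨hx, hx'⟩ => ⟨hx, fun hax => hx' ?_⟩,
    fun hsub => (hsub ⟨ha', hfar⟩).2 (by simp)⟩ (A.finite_toSet.subset fun x hx => hx.1)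
  simpa using M'.add_mem hstep (hM hax)

namespace IsRegularEntailment

variable {G : Type*} [AddCommGroup G] [Preorder G] [CovariantClass G G (· + ·) (· ≤ ·)]
  [DecidableEq G] {r : Finset G → Finset G → Prop}

theorem of_add_eq_add (hr : IsRegularEntailment r) {u v s t : G} (h : u + v = s + t) :
    r {u, v} {s, t} := by
  have := hr.regular 0 s u (v - s)
  rwa [zero_add, zero_add, add_sub_cancel, ← add_sub_assoc, h, add_sub_cancel_left] at this

theorem image_add_iff (hr : IsRegularEntailment r) (x : G) {A B : Finset G} :
    r (A.image (· + x)) (B.image (· + x)) ↔ r A B := by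
  refine ⟨hr.translate x, fun h => hr.translate (-x) ?_⟩
  simpa only [image_image, Function.comp_def, add_neg_cancel_right, image_id'] using h

theorem of_sub_mem_closure (hr : IsRegularEntailment r) {Γ Δ : Finset G} {c d : G}
    (hc : c ∈ Γ) (hd : d ∈ Δ) (h : c - d ∈ AddSubmonoid.closure ((Δ : Set G) - (Γ : Set G))) :
    r Γ Δ := by
  suffices key : ∀ s ∈ AddSubmonoid.closure ((Δ : Set G) - (Γ : Set G)), ∀ Γ' Δ' : Finset G,
      Γ ⊆ Γ' → Δ ⊆ Δ' → ∀ c ∈ Γ', ∀ d ∈ Δ', c - d = s → r Γ' Δ' from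
    key _ h Γ Δ subset_rfl subset_rfl c hc d hd rfl
  intro s hs
  induction hs using AddSubmonoid.closure_induction with
  | mem s hs =>
    obtain ⟨d', hd', c', hc', rfl⟩ := hs
    intro Γ' Δ' hΓ hΔ c hc d hd hcd
    refine hr.weaken (insert_nonempty _ _) (insert_nonempty _ _) ?_ ?_
      (hr.of_add_eq_add (sub_eq_sub_iff_add_eq_add.1 hcd))
    · exact insert_subset hc (singleton_subset_iff.2 (hΓ hc'))
    · exact insert_subset (hΔ hd') (singleton_subset_iff.2 hd)
  | zero =>
    intro Γ' Δ' _ _ c hc d hd hcd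
    rw [sub_eq_zero] at hcd
    subst hcd
    exact hr.weaken (singleton_nonempty c) (singleton_nonempty c) (singleton_subset_iff.2 hc)
      (singleton_subset_iff.2 hd) (hr.of_le le_rfl)
  | add s t _ _ ihs iht =>
    intro Γ' Δ' hΓ hΔ c hc d hd hcd
    refine hr.cut (c - s) ⟨c, hc⟩ ⟨d, hd⟩ ?_ ?_
    · exact iht _ _ (hΓ.trans (subset_insert _ _)) hΔ _ (mem_insert_self _ _) d hd
        (by rw [sub_sub, add_comm, ← sub_sub, hcd, add_sub_cancel_left])
    · exact ihs _ _ hΓ (hΔ.trans (subset_insert _ _)) c hc _ (mem_insert_self _ _)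
        (sub_sub_cancel c s)

theorem cut_finset_left (hr : IsRegularEntailment r) {Γ Δ C : Finset G} (hΓ : Γ.Nonempty)
    (hΔ : Δ.Nonempty) (h : r (Γ ∪ C) Δ) (hC : ∀ c ∈ C, r Γ (insert c Δ)) : r Γ Δ := by
  induction C using Finset.induction_on generalizing Γ with
  | empty => simpa using h
  | insert c C _ ih =>
    refine hr.cut c hΓ hΔ (ih (insert_nonempty c Γ) (by rwa [insert_union_comm]) fun d hd => ?_)
      (hC c (mem_insert_self c C))
    exact hr.weaken hΓ (insert_nonempty d Δ) (subset_insert c Γ) subset_rfl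
      (hC d (mem_insert_of_mem hd))

theorem cut_finset_right (hr : IsRegularEntailment r) {Γ Δ C : Finset G} (hΓ : Γ.Nonempty)
    (hΔ : Δ.Nonempty) (h : r Γ (Δ ∪ C)) (hC : ∀ c ∈ C, r (insert c Γ) Δ) : r Γ Δ := by
  induction C using Finset.induction_on generalizing Δ with
  | empty => simpa using h
  | insert c C _ ih =>
    refine hr.cut c hΓ hΔ (hC c (mem_insert_self c C))
      (ih (insert_nonempty c Δ) (by rwa [insert_union_comm]) fun d hd => ?_)
    exact hr.weaken (insert_nonempty d Γ) hΔ subset_rfl (subset_insert c Δ)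
      (hC d (mem_insert_of_mem hd))

theorem zero_entails_sub_union (hr : IsRegularEntailment r) {A B : Finset G}
    (hB : B.Nonempty) (h : r A B) {a : G} (ha : a ∈ A) (S : Finset G) :
    r {0} ((B - A) ∪ S) := by
  refine hr.cut_finset_left (C := A.image (· - a)) (singleton_nonempty 0)
    ((hB.sub ⟨a, ha⟩).mono subset_union_left) ?_ ?_
  · refine hr.weaken (Nonempty.image ⟨a, ha⟩ _) (hB.image _) ?_ ?_ ((hr.image_add_iff (-a)).2 h)
    · simp only [← sub_eq_add_neg]
      exact subset_union_right
    · intro x hx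
      obtain ⟨b, hb, rfl⟩ := mem_image.1 hx
      rw [← sub_eq_add_neg]
      exact mem_union_left _ (sub_mem_sub hb ha)
  · intro c hc
    obtain ⟨a', ha', rfl⟩ := mem_image.1 hc
    by_cases hreach : a - a' ∈ AddSubmonoid.closure (S : Set G)
    · refine hr.of_sub_mem_closure (mem_singleton_self 0) (mem_insert_self _ _) ?_
      rw [zero_sub, neg_sub]
      refine AddSubmonoid.closure_mono
        (fun s hs => Set.mem_sub.2 ⟨s, by simp [hs], 0, by simp, sub_zero s⟩) hreach
    · rw [← union_insert]
      exact hr.zero_entails_sub_union hB h ha' _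
termination_by {x | x ∈ A ∧ a - x ∉ AddSubmonoid.closure (S : Set G)}.ncard
decreasing_by
  exact ncard_setOf_sub_notMem_lt
    (AddSubmonoid.closure_mono (by simp)) ha' hreach (AddSubmonoid.subset_closure (by simp))

theorem entails_union_of_zero_entails_sub (hr : IsRegularEntailment r) {A B : Finset G}
    (hB : B.Nonempty) (h : r {0} (B - A)) {a : G} (ha : a ∈ A) (E : Finset G) :
    r (A ∪ E) B := by
  refine hr.cut_finset_right (C := (B - A).image (· + a)) ⟨a, mem_union_left E ha⟩ hB ?_ ?_
  · refine hr.weaken ((singleton_nonempty 0).image _) ((hB.sub ⟨a, ha⟩).image _) ?_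
      subset_union_right ((hr.image_add_iff a).2 h)
    simpa using mem_union_left E ha
  · intro c hc
    obtain ⟨_, hba, rfl⟩ := mem_image.1 hc
    obtain ⟨b, hb, a', ha', rfl⟩ := mem_sub.1 hba
    by_cases hreach : a - a' ∈ AddSubmonoid.closure ((B : Set G) - (E : Set G))
    · refine hr.of_sub_mem_closure (mem_insert_self _ _) hb ?_
      rw [show b - a' + a - b = a - a' by abel]
      exact AddSubmonoid.closure_mono
        (Set.sub_subset_sub_left fun x hx => by simp [hx]) hreach
    · rw [← union_insert]
      exact hr.entails_union_of_zero_entails_sub hB h ha' _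
termination_by {x | x ∈ A ∧ a - x ∉ AddSubmonoid.closure ((B : Set G) - (E : Set G))}.ncard
decreasing_by
  exact ncard_setOf_sub_notMem_lt
    (AddSubmonoid.closure_mono (Set.sub_subset_sub_left (by simp))) ha' hreach
    (AddSubmonoid.subset_closure
      ⟨b, hb, b - a' + a, by simp, by rw [sub_add]; exact sub_sub_cancel _ _⟩)

theorem entails_iff_zero_entails_sub (hr : IsRegularEntailment r) {A B : Finset G}
    (hA : A.Nonempty) (hB : B.Nonempty) : r A B ↔ r {0} (B - A) := by
  obtain ⟨a, ha⟩ := hA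
  exact ⟨fun h => by simpa using hr.zero_entails_sub_union hB h ha ∅,
    fun h => by simpa using hr.entails_union_of_zero_entails_sub hB h ha ∅⟩

end IsRegularEntailment

theorem regular_entailment_minkowski {G : Type*} [AddCommGroup G] [Preorder G]
    [CovariantClass G G (· + ·) (· ≤ ·)] [DecidableEq G]
    (r : Finset G → Finset G → Prop) (hr : IsRegularEntailment r)
    (A B : Finset G) (hA : A.Nonempty) (hB : B.Nonempty) :
    (r A B ↔ r (A - B) {0}) ∧ (r A B ↔ r {0} (B - A)) := by
  have hAB := hr.entails_iff_zero_entails_sub hA hB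
  refine ⟨?_, hAB⟩
  rw [hAB, hr.entails_iff_zero_entails_sub (hA.sub hB) (singleton_nonempty 0),
    singleton_zero, zero_sub, neg_sub]
end
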